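/- arXiv:2505.24503 — 3 statements merged into one kernel-verified Lean document; each statement's English description precedes it below -/
import Mathlib

section
/- Consider two agents with identical additive valuation v with v(G) = 1, and a partition (A_1, A_2) of G such that v(A_1) ≤ (√5 − 1)/2 and every g ∈ A_2 satisfies v(g) > (√5 − 1)/2 − v(A_1). If additionally v(A_1) ≥ √5 − 2, then for every g ∈ A_2, v(A_1) ≥ ((√5 − 1)/2)·v(A_2 \ {g}), and moreover v(A_2) ≥ ((√5 − 1)/2)·v(A_1); hence the allocation is ((√5−1)/2)-EFX. -/
open Finset

/-!
Write `φ = (√5 − 1)/2`, `a = v(A₁)` and `v(A₂) = 1 − a`; the golden ratio enters only through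
`φ² = 1 − φ`, equivalently `φ(1 − φ) = √5 − 2`.
Removing `g` from `A₂` leaves less than `1 − φ`, because `v(g) > φ − a`, so
`φ·v(A₂ \ {g}) < φ(1 − φ) = √5 − 2 ≤ a`. Conversely `a ≤ φ` gives `φa ≤ φ² = 1 − φ ≤ 1 − a`.
-/

lemma sum_eq_sub_sum_of_disjoint_union {ι M : Type*} [DecidableEq ι] [AddCommGroup M]
    (f : ι → M) {s t u : Finset ι} (hdisj : Disjoint s t) (hunion : s ∪ t = u) :
    ∑ i ∈ t, f i = ∑ i ∈ u, f i - ∑ i ∈ s, f i := by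
  rw [← hunion, sum_union hdisj, add_sub_cancel_left]

lemma mul_one_sub_sub_le {t a x : ℝ} (ht : 0 ≤ t) (hx : t - a < x) (ha : t * (1 - t) ≤ a) :
    t * (1 - a - x) ≤ a :=
  calc t * (1 - a - x) ≤ t * (1 - t) := mul_le_mul_of_nonneg_left (by linarith) ht
    _ ≤ a := ha

lemma mul_le_one_sub_of_le {t a : ℝ} (ht : 0 ≤ t) (ht_sq : t * t = 1 - t) (ha : a ≤ t) :
    t * a ≤ 1 - a :=
  calc t * a ≤ t * t := mul_le_mul_of_nonneg_left ha ht
    _ = 1 - t := ht_sq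
    _ ≤ 1 - a := by linarith

lemma invGolden_nonneg : 0 ≤ (Real.sqrt 5 - 1) / 2 := by
  have : (1 : ℝ) ≤ Real.sqrt 5 := Real.one_le_sqrt.mpr (by norm_num)
  linarith

lemma invGolden_mul_self : (Real.sqrt 5 - 1) / 2 * ((Real.sqrt 5 - 1) / 2) =
    1 - (Real.sqrt 5 - 1) / 2 := by
  have := Real.mul_self_sqrt (show (0 : ℝ) ≤ 5 by norm_num)
  linear_combination this / 4

lemma invGolden_mul_one_sub : (Real.sqrt 5 - 1) / 2 * (1 - (Real.sqrt 5 - 1) / 2) =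
    Real.sqrt 5 - 2 := by
  have := Real.mul_self_sqrt (show (0 : ℝ) ≤ 5 by norm_num)
  linear_combination (-1 / 4 : ℝ) * this

theorem golden_EFX_case2_general {G : Type*} [Fintype G] [DecidableEq G]
    (v : G → ℝ)
    (htot : ∑ g ∈ (univ : Finset G), v g = 1)
    (A1 A2 : Finset G) (hdisj : Disjoint A1 A2) (hcover : A1 ∪ A2 = univ)
    (h1 : (∑ g ∈ A1, v g) ≤ (Real.sqrt 5 - 1) / 2)
    (h2 : ∀ g ∈ A2, v g > (Real.sqrt 5 - 1) / 2 - (∑ g' ∈ A1, v g'))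
    (h3 : (∑ g ∈ A1, v g) ≥ Real.sqrt 5 - 2) :
    (∀ g ∈ A2, (∑ x ∈ A1, v x) ≥ (Real.sqrt 5 - 1) / 2 * ∑ x ∈ A2.erase g, v x) ∧
      (∑ x ∈ A2, v x) ≥ (Real.sqrt 5 - 1) / 2 * (∑ x ∈ A1, v x) := by
  have hA2 : ∑ x ∈ A2, v x = 1 - ∑ x ∈ A1, v x := by
    rw [sum_eq_sub_sum_of_disjoint_union v hdisj hcover, htot]
  refine ⟨fun g hg => ?_, ?_⟩
  · rw [sum_erase_eq_sub hg, hA2]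
    exact mul_one_sub_sub_le invGolden_nonneg (h2 g hg) (invGolden_mul_one_sub.trans_le h3)
  · rw [hA2]
    exact mul_le_one_sub_of_le invGolden_nonneg invGolden_mul_self h1

/-- Identical valuations, `v(G) = 1`: if `v(A_1) ≤ (√5−1)/2`, every `g ∈ A_2` has
`v(g) > (√5−1)/2 − v(A_1)`, and `v(A_1) ≥ √5 − 2`, then for every `g ∈ A_2`,
`v(A_1) ≥ ((√5−1)/2)·v(A_2 \ {g})`, and `v(A_2) ≥ ((√5−1)/2)·v(A_1)`. -/
theorem golden_EFX_case2 {G : Type*} [Fintype G] [DecidableEq G]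
    (v : G → ℝ) (hv : ∀ g, 0 ≤ v g)
    (htot : ∑ g ∈ (univ : Finset G), v g = 1)
    (A1 A2 : Finset G) (hdisj : Disjoint A1 A2) (hcover : A1 ∪ A2 = univ)
    (h1 : (∑ g ∈ A1, v g) ≤ (Real.sqrt 5 - 1) / 2)
    (h2 : ∀ g ∈ A2, v g > (Real.sqrt 5 - 1) / 2 - (∑ g' ∈ A1, v g'))
    (h3 : (∑ g ∈ A1, v g) ≥ Real.sqrt 5 - 2) :
    (∀ g ∈ A2, (∑ x ∈ A1, v x) ≥ (Real.sqrt 5 - 1) / 2 * ∑ x ∈ A2.erase g, v x) ∧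
      (∑ x ∈ A2, v x) ≥ (Real.sqrt 5 - 1) / 2 * (∑ x ∈ A1, v x) :=
  golden_EFX_case2_general v htot A1 A2 hdisj hcover h1 h2 h3
end

section
/- For the three-or-more-agent adversarial instance with identical additive valuation given by v(g_1) = v(g_2) = ε, v(g_3) = ⋯ = v(g_{n+1}) = (1−2ε)/(n−1) (so v(G) = 1), any allocation of the n+1 goods to n agents in which g_1 and g_2 go to distinct agents contains an agent i with v(A_i) ≤ ε and an agent j ≠ i with |A_j| ≥ 2 and v(A_j \ {g}) ≥ (1−2ε)/(n−1) for g = argmin_{g' ∈ A_j} v(g'). Hence the allocation is not γ-EFX whenever γ > (n−1)ε/(1−2ε). -/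
/-!
Besides `g_1, g_2` there are only `n − 1` goods, so by pigeonhole some agent `i` receives
none of them; as `g_1` and `g_2` go to distinct agents, `A_i` holds at most
one good and `v(A_i) ≤ ε`. With `n + 1` goods and `n` agents some `A_j` holds two goods, and
these cannot be `g_1, g_2`, so `A_j` contains a large good. Removing a minimum-value good from
a bundle of at least two goods leaves a set worth at least the bundle's most valuable good, so
`v(A_j \ {g}) ≥ (1−2ε)/(n−1)`, and `i` envies `j` beyond every `γ > ε · (n−1)/(1−2ε)`.
-/

open Finset

theorem Finset.le_sum_erase_of_forall_le {α M : Type*} [DecidableEq α] [AddCommMonoid M]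
    [PartialOrder M] [IsOrderedAddMonoid M] {s : Finset α} {f : α → M}
    (hf : ∀ x ∈ s, 0 ≤ f x) (hs : 2 ≤ #s) {g b : α} (hg : g ∈ s)
    (hmin : ∀ x ∈ s, f g ≤ f x) (hb : b ∈ s) :
    f b ≤ ∑ x ∈ s.erase g, f x := by
  have hf' : ∀ x ∈ s.erase g, 0 ≤ f x := fun x hx => hf x (mem_of_mem_erase hx)
  by_cases hbg : b = g
  · obtain ⟨x, hx⟩ : (s.erase g).Nonempty := by
      rw [← card_pos, card_erase_of_mem hg]; omega
    calc f b = f g := by rw [hbg]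
      _ ≤ f x := hmin x (mem_of_mem_erase hx)
      _ ≤ ∑ x ∈ s.erase g, f x := single_le_sum hf' hx
  · exact single_le_sum hf' (mem_erase.mpr ⟨hbg, hb⟩)

namespace Allocation

variable {α ι : Type*} [Fintype α] [DecidableEq ι]

def bundle (alloc : α → ι) (i : ι) : Finset α := {x | alloc x = i}

@[simp]
theorem mem_bundle {alloc : α → ι} {i : ι} {x : α} : x ∈ bundle alloc i ↔ alloc x = i := by
  simp [bundle]

variable (alloc : α → ι)

theorem exists_disjoint_bundle [Fintype ι] {B : Finset α} (hB : #B < Fintype.card ι) :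
    ∃ i, Disjoint (bundle alloc i) B := by
  obtain ⟨i, -, hi⟩ : ∃ i ∈ univ, i ∉ B.image alloc :=
    exists_mem_notMem_of_card_lt_card ((card_image_le).trans_lt (by simpa using hB))
  refine ⟨i, disjoint_left.mpr fun x hx hxB => hi (mem_image.mpr ⟨x, hxB, ?_⟩)⟩
  simpa using hx

theorem exists_two_le_card_bundle [Fintype ι] (h : Fintype.card ι < Fintype.card α) :
    ∃ j, 2 ≤ #(bundle alloc j) := by
  obtain ⟨x, y, hxy, hfxy⟩ := Fintype.exists_ne_map_eq_of_card_lt alloc h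
  exact ⟨alloc x, one_lt_card.mpr ⟨x, by simp, y, by simp [hfxy], hxy⟩⟩

variable [DecidableEq α]

/-- `γ`-EFX. -/
def IsApproxEFX (γ : ℝ) (v : α → ℝ) (alloc : α → ι) : Prop :=
  ∀ i j : ι, (bundle alloc j).Nonempty → ∀ g ∈ bundle alloc j,
    ∑ g' ∈ bundle alloc i, v g' ≥ γ * ∑ g' ∈ (bundle alloc j).erase g, v g'

variable {alloc} {a b : α}

theorem card_bundle_le_one_of_subset_pair (hab : alloc a ≠ alloc b) {i : ι}
    (h : bundle alloc i ⊆ {a, b}) : #(bundle alloc i) ≤ 1 := by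
  refine card_le_one.mpr fun x hx y hy => ?_
  have hxi := mem_bundle.mp hx
  have hyi := mem_bundle.mp hy
  have hx' : x = a ∨ x = b := by simpa using h hx
  have hy' : y = a ∨ y = b := by simpa using h hy
  rcases hx' with rfl | rfl <;> rcases hy' with rfl | rfl
  · rfl
  · exact absurd (hxi.trans hyi.symm) hab
  · exact absurd (hyi.trans hxi.symm) hab
  · rfl

theorem exists_bundle_subset_pair [Fintype ι] (hcard : Fintype.card α = Fintype.card ι + 1)
    (hab : alloc a ≠ alloc b) : ∃ i, bundle alloc i ⊆ {a, b} := by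
  have hne : a ≠ b := ne_of_apply_ne alloc hab
  have hι : 0 < Fintype.card ι := Fintype.card_pos_iff.mpr ⟨alloc a⟩
  obtain ⟨i, hi⟩ := exists_disjoint_bundle alloc (B := {a, b}ᶜ)
    (by rw [card_compl, card_pair hne]; omega)
  exact ⟨i, disjoint_compl_right_iff.mp hi⟩

theorem exists_mem_bundle_ne_ne (hab : alloc a ≠ alloc b) {j : ι}
    (hj : 2 ≤ #(bundle alloc j)) : ∃ x ∈ bundle alloc j, x ≠ a ∧ x ≠ b := by
  by_contra! h
  have := card_bundle_le_one_of_subset_pair (i := j) hab fun x hx => by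
    by_cases hxa : x = a
    · simp [hxa]
    · simp [h x hx hxa]
  omega

variable {v : α → ℝ} {ε β : ℝ}

theorem sum_bundle_le_of_subset_pair (hab : alloc a ≠ alloc b) (hε : 0 ≤ ε)
    (hva : v a ≤ ε) (hvb : v b ≤ ε) {i : ι} (h : bundle alloc i ⊆ {a, b}) :
    ∑ x ∈ bundle alloc i, v x ≤ ε :=
  calc ∑ x ∈ bundle alloc i, v x ≤ #(bundle alloc i) • ε :=
        sum_le_card_nsmul _ _ _ fun x hx => by
          rcases (by simpa using h hx : x = a ∨ x = b) with rfl | rfl <;> assumption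
    _ ≤ 1 • ε := nsmul_le_nsmul_left hε (card_bundle_le_one_of_subset_pair hab h)
    _ = ε := one_nsmul ε

theorem exists_envious_pair [Fintype ι] (hcard : Fintype.card α = Fintype.card ι + 1)
    (hab : alloc a ≠ alloc b) (hε : 0 ≤ ε) (hβ : 0 ≤ β) (hva : v a = ε) (hvb : v b = ε)
    (hv : ∀ x, x ≠ a → x ≠ b → v x = β) :
    ∃ i, ∑ x ∈ bundle alloc i, v x ≤ ε ∧
      ∃ j, j ≠ i ∧ 2 ≤ #(bundle alloc j) ∧
        ∃ g ∈ bundle alloc j, (∀ g' ∈ bundle alloc j, v g ≤ v g') ∧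
          β ≤ ∑ g' ∈ (bundle alloc j).erase g, v g' := by
  have hv0 : ∀ x, 0 ≤ v x := fun x => by
    by_cases hxa : x = a
    · rw [hxa, hva]; exact hε
    by_cases hxb : x = b
    · rw [hxb, hvb]; exact hε
    rw [hv x hxa hxb]; exact hβ
  obtain ⟨i, hi⟩ := exists_bundle_subset_pair hcard hab
  obtain ⟨j, hj⟩ := exists_two_le_card_bundle alloc (by omega)
  have hji : j ≠ i := by
    rintro rfl
    have := card_bundle_le_one_of_subset_pair hab hi
    omega
  obtain ⟨g, hg, hgmin⟩ := exists_min_image (bundle alloc j) v (card_pos.mp (by omega))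
  obtain ⟨x, hx, hxa, hxb⟩ := exists_mem_bundle_ne_ne hab hj
  refine ⟨i, sum_bundle_le_of_subset_pair hab hε hva.le hvb.le hi, j, hji, hj, g, hg, hgmin, ?_⟩
  calc β = v x := (hv x hxa hxb).symm
    _ ≤ _ := le_sum_erase_of_forall_le (fun y _ => hv0 y) hj hg hgmin hx

theorem not_isApproxEFX_of_envy {γ : ℝ} (hε : 0 ≤ ε) (hβ : 0 < β) (hγ : ε / β < γ) {i j : ι}
    (hi : ∑ x ∈ bundle alloc i, v x ≤ ε) {g : α} (hg : g ∈ bundle alloc j)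
    (hj : β ≤ ∑ x ∈ (bundle alloc j).erase g, v x) :
    ¬ IsApproxEFX γ v alloc := fun hEFX => by
  have hγ0 : 0 ≤ γ := (div_nonneg hε hβ.le).trans hγ.le
  refine absurd (hEFX i j ⟨g, hg⟩ g hg) (not_le.mpr ?_)
  calc ∑ x ∈ bundle alloc i, v x ≤ ε := hi
    _ < γ * β := (div_lt_iff₀ hβ).mp hγ
    _ ≤ γ * ∑ x ∈ (bundle alloc j).erase g, v x := mul_le_mul_of_nonneg_left hj hγ0

end Allocation

open Allocation in
/-- Adversarial identical-valuations instance for `n ≥ 3`: goods `g_1, g_2` of value `ε`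
and `n − 1` goods of value `(1−2ε)/(n−1)`. If `g_1` and `g_2` go to distinct agents, then
some agent `i` has `v(A_i) ≤ ε` while some other agent `j` has `|A_j| ≥ 2` and
`v(A_j \ {g}) ≥ (1−2ε)/(n−1)` for a minimum-value `g ∈ A_j`; hence the allocation is not
`γ`-EFX for any `γ > (n−1)ε/(1−2ε)`. -/
theorem identical_norm_EFX_impossible (n : ℕ) (hn : 3 ≤ n)
    (ε : ℝ) (hε : 0 < ε) (hε4 : ε < 1 / 4)
    (v : Fin (n + 1) → ℝ)
    (hv0 : v 0 = ε) (hv1 : v 1 = ε)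
    (hvk : ∀ g : Fin (n + 1), 2 ≤ (g : ℕ) → v g = (1 - 2 * ε) / ((n : ℝ) - 1))
    (alloc : Fin (n + 1) → Fin n) (h01 : alloc 0 ≠ alloc 1) :
    (∃ i : Fin n,
      (∑ g ∈ univ.filter (fun x : Fin (n + 1) => alloc x = i), v g) ≤ ε ∧
      ∃ j : Fin n, j ≠ i ∧
        2 ≤ (univ.filter (fun x : Fin (n + 1) => alloc x = j)).card ∧
        ∃ g ∈ univ.filter (fun x : Fin (n + 1) => alloc x = j),
          (∀ g' ∈ univ.filter (fun x : Fin (n + 1) => alloc x = j), v g ≤ v g') ∧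
          (∑ g' ∈ (univ.filter (fun x : Fin (n + 1) => alloc x = j)).erase g, v g') ≥
            (1 - 2 * ε) / ((n : ℝ) - 1)) ∧
    ∀ γ : ℝ, γ > ((n : ℝ) - 1) * ε / (1 - 2 * ε) →
      ¬ (∀ i j : Fin n,
          (univ.filter (fun x : Fin (n + 1) => alloc x = j)).Nonempty →
          ∀ g ∈ univ.filter (fun x : Fin (n + 1) => alloc x = j),
            (∑ g' ∈ univ.filter (fun x : Fin (n + 1) => alloc x = i), v g') ≥
              γ * ∑ g' ∈ (univ.filter (fun x : Fin (n + 1) => alloc x = j)).erase g, v g') := by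
  have hβ : 0 < (1 - 2 * ε) / ((n : ℝ) - 1) := by
    have : (3 : ℝ) ≤ n := by exact_mod_cast hn
    apply div_pos <;> linarith
  have hvβ : ∀ g : Fin (n + 1), g ≠ 0 → g ≠ 1 → v g = (1 - 2 * ε) / ((n : ℝ) - 1) :=
    fun g h0 h1 => hvk g <| by
      have h0' : (g : ℕ) ≠ 0 := Fin.val_ne_iff.mpr h0
      have h1' : (g : ℕ) ≠ 1 := by
        simpa [Fin.val_one', Nat.mod_eq_of_lt (by omega : 1 < n + 1)] using Fin.val_ne_iff.mpr h1
      omega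
  obtain ⟨i, hi, j, hji, hj, g, hg, hgmin, hgj⟩ :=
    exists_envious_pair (by simp) h01 hε.le hβ.le hv0 hv1 hvβ
  refine ⟨⟨i, hi, j, hji, hj, g, hg, hgmin, hgj⟩, fun γ hγ => ?_⟩
  refine not_isApproxEFX_of_envy hε.le hβ ?_ hi hg hgj
  rwa [div_div_eq_mul_div, mul_comm]
end

section
/- Let n = 2 and suppose an allocation (A_1, A_2) of goods with identical additive valuation v, v(G) = 1, satisfies: A_1 consists of k goods each of value ε plus possibly one good of value (1−kε)/2, and A_2 contains at least one good of value (1−kε)/2. If both goods of value (1−kε)/2 are in A_2, then γ-EFX forces γ ≤ 2kε/(1−kε); if exactly one is in A_2 and A_1 holds the k small goods plus the other, then γ-EFX forces γ ≤ (1−kε)/(kε − 2ε + 1). As ε → 0 with kε → √5 − 2, both bounds tend to (√5−1)/2. -/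
/-!
If both big goods lie in `A₂`, then `A₁` holds only small goods, worth at most `kε`, while
`A₂` still contains a big good, worth `(1 - kε)/2`, after removing the other one. If `A₁` is
the small goods plus one big good, removing a small good from `A₁` leaves
`(1 - kε)/2 + (k - 1)ε`, to be compared with `v(A₂) = (1 - kε)/2`. At `kε = √5 - 2` both
ratios equal `(√5 - 1)/2`.
-/

open Finset Real

lemma le_div_of_mul_le_of_le {a b c γ : ℝ} (hb : 0 < b) (hbc : b ≤ c) (ha : 0 ≤ a)
    (h : γ * c ≤ a) : γ ≤ a / b := by
  rcases le_or_gt γ 0 with hγ | hγ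
  · exact hγ.trans (div_nonneg ha hb.le)
  · rw [le_div_iff₀ hb]
    exact (mul_le_mul_of_nonneg_left hbc hγ.le).trans h

section

variable {G : Type*} [DecidableEq G] {v : G → ℝ}

lemma sum_erase_insert {s : Finset G} {a b : G} (hb : b ∉ s) (ha : a ∈ s) :
    ∑ x ∈ (insert b s).erase a, v x = v b + (∑ x ∈ s, v x - v a) := by
  rw [erase_insert_of_ne (ne_of_mem_of_not_mem ha hb).symm, sum_insert (fun h => hb (mem_of_mem_erase h)),
    sum_erase_eq_sub ha]

lemma le_sum_div_of_mem_of_mem (hv : ∀ g, 0 ≤ v g) {small A₁ A₂ : Finset G} {b₁ b₂ : G}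
    {γ : ℝ} (hA₁ : A₁ ⊆ insert b₁ (insert b₂ small)) (hdisj : Disjoint A₁ A₂) (hb : b₁ ≠ b₂)
    (h₁ : b₁ ∈ A₂) (h₂ : b₂ ∈ A₂) (hb₂ : 0 < v b₂)
    (hefx : γ * ∑ x ∈ A₂.erase b₁, v x ≤ ∑ x ∈ A₁, v x) :
    γ ≤ (∑ x ∈ small, v x) / v b₂ := by
  rw [subset_insert_iff_of_notMem (disjoint_right.mp hdisj h₁),
    subset_insert_iff_of_notMem (disjoint_right.mp hdisj h₂)] at hA₁
  exact le_div_of_mul_le_of_le hb₂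
    (single_le_sum (fun x _ => hv x) (mem_erase.mpr ⟨hb.symm, h₂⟩))
    (sum_nonneg fun x _ => hv x)
    (hefx.trans (sum_le_sum_of_subset_of_nonneg hA₁ fun x _ _ => hv x))

end

lemma two_mul_sqrt_five_sub_two_div : 2 * (√5 - 2) / (1 - (√5 - 2)) = (√5 - 1) / 2 := by
  have h5 : √5 ^ 2 = 5 := sq_sqrt (by norm_num)
  rw [div_eq_div_iff (by nlinarith [sqrt_nonneg 5]) two_ne_zero]
  nlinarith

lemma one_sub_sqrt_five_sub_two_div : (1 - (√5 - 2)) / ((√5 - 2) + 1) = (√5 - 1) / 2 := by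
  have h5 : √5 ^ 2 = 5 := sq_sqrt (by norm_num)
  rw [div_eq_div_iff (by nlinarith [sqrt_nonneg 5]) two_ne_zero]
  nlinarith

theorem golden_upper_bound_instance_general {G : Type*} [Fintype G] [DecidableEq G]
    (v : G → ℝ) (hv : ∀ g, 0 ≤ v g)
    (ε : ℝ) (k : ℕ) (hk : 1 ≤ k) (hε : 0 < ε) (hkε : (k : ℝ) * ε < 1)
    (small : Finset G) (hcard : small.card = k) (hsmall : ∀ g ∈ small, v g = ε)
    (b1 b2 : G) (hb : b1 ≠ b2) (hb1 : b1 ∉ small)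
    (hvb1 : v b1 = (1 - (k : ℝ) * ε) / 2) (hvb2 : v b2 = (1 - (k : ℝ) * ε) / 2)
    (hcoverG : (univ : Finset G) = insert b1 (insert b2 small))
    (A1 A2 : Finset G) (hdisj : Disjoint A1 A2)
    (γ : ℝ)
    (hefx1 : ∀ g ∈ A2, (∑ x ∈ A1, v x) ≥ γ * ∑ x ∈ A2.erase g, v x)
    (hefx2 : ∀ g ∈ A1, (∑ x ∈ A2, v x) ≥ γ * ∑ x ∈ A1.erase g, v x) :
    ((b1 ∈ A2 ∧ b2 ∈ A2) → γ ≤ 2 * ((k : ℝ) * ε) / (1 - (k : ℝ) * ε)) ∧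
    ((A1 = insert b1 small ∧ A2 = {b2}) →
      γ ≤ (1 - (k : ℝ) * ε) / ((k : ℝ) * ε - 2 * ε + 1)) ∧
    (2 * (Real.sqrt 5 - 2) / (1 - (Real.sqrt 5 - 2)) = (Real.sqrt 5 - 1) / 2) ∧
    ((1 - (Real.sqrt 5 - 2)) / ((Real.sqrt 5 - 2) + 1) = (Real.sqrt 5 - 1) / 2) := by
  have hk₁ : (1 : ℝ) ≤ k := by exact_mod_cast hk
  have hsum_small : ∑ x ∈ small, v x = k * ε := by
    rw [sum_eq_card_nsmul hsmall, hcard, nsmul_eq_mul]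
  refine ⟨fun ⟨h₁, h₂⟩ => ?_, ?_, two_mul_sqrt_five_sub_two_div,
    one_sub_sqrt_five_sub_two_div⟩
  · have hb₂ : 0 < v b2 := by rw [hvb2]; linarith
    have h := le_sum_div_of_mem_of_mem hv (hcoverG ▸ subset_univ A1) hdisj hb h₁ h₂ hb₂
      (hefx1 b1 h₁)
    rwa [hsum_small, hvb2, div_div_eq_mul_div, mul_comm] at h
  · rintro ⟨rfl, rfl⟩
    obtain ⟨s, hs⟩ : small.Nonempty := card_pos.mp (by omega)
    have h := hefx2 s (mem_insert_of_mem hs)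
    rw [sum_singleton, sum_erase_insert hb1 hs, hsum_small, hvb1, hvb2, hsmall s hs] at h
    rw [le_div_iff₀ (by nlinarith)]
    linarith

/-- Upper-bound instance for `(√5−1)/2`-EFX with two agents and identical valuations:
`k` goods of value `ε` plus two goods of value `(1−kε)/2`, with `v(G) = 1`. If both big
goods lie in `A_2`, `γ`-EFX forces `γ ≤ 2kε/(1−kε)`; if `A_1` consists of the `k` small
goods plus one big good and `A_2` of the other big good, `γ`-EFX forces
`γ ≤ (1−kε)/(kε−2ε+1)`. As `ε → 0` with `kε → √5−2`, both bounds tend to `(√5−1)/2`. -/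
theorem golden_upper_bound_instance {G : Type*} [Fintype G] [DecidableEq G]
    (v : G → ℝ) (hv : ∀ g, 0 ≤ v g)
    (ε : ℝ) (k : ℕ) (hk : 1 ≤ k) (hε : 0 < ε) (hkε : (k : ℝ) * ε < 1)
    (small : Finset G) (hcard : small.card = k) (hsmall : ∀ g ∈ small, v g = ε)
    (b1 b2 : G) (hb : b1 ≠ b2) (hb1 : b1 ∉ small) (hb2 : b2 ∉ small)
    (hvb1 : v b1 = (1 - (k : ℝ) * ε) / 2) (hvb2 : v b2 = (1 - (k : ℝ) * ε) / 2)
    (hcoverG : (univ : Finset G) = insert b1 (insert b2 small))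
    (htot : ∑ g ∈ (univ : Finset G), v g = 1)
    (A1 A2 : Finset G) (hdisj : Disjoint A1 A2) (hcover : A1 ∪ A2 = univ)
    (γ : ℝ)
    (hefx1 : ∀ g ∈ A2, (∑ x ∈ A1, v x) ≥ γ * ∑ x ∈ A2.erase g, v x)
    (hefx2 : ∀ g ∈ A1, (∑ x ∈ A2, v x) ≥ γ * ∑ x ∈ A1.erase g, v x) :
    ((b1 ∈ A2 ∧ b2 ∈ A2) → γ ≤ 2 * ((k : ℝ) * ε) / (1 - (k : ℝ) * ε)) ∧
    ((A1 = insert b1 small ∧ A2 = {b2}) →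
      γ ≤ (1 - (k : ℝ) * ε) / ((k : ℝ) * ε - 2 * ε + 1)) ∧
    (2 * (Real.sqrt 5 - 2) / (1 - (Real.sqrt 5 - 2)) = (Real.sqrt 5 - 1) / 2) ∧
    ((1 - (Real.sqrt 5 - 2)) / ((Real.sqrt 5 - 2) + 1) = (Real.sqrt 5 - 1) / 2) :=
  golden_upper_bound_instance_general v hv ε k hk hε hkε small hcard hsmall b1 b2 hb hb1 hvb1 hvb2
    hcoverG A1 A2 hdisj γ hefx1 hefx2
end
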